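/- Let F be any CDF and 0 ≤ l < u. Then ∫_{(l,u]}(F(t) − F(l)) dF(t) + ∫_{(l,u]}(F(t−) − F(l)) dF(t) = (F(u) − F(l))², where F(t−) denotes the left limit. -/

import Mathlib

/-! Identify `F` with the measure `ν = dF` restricted to `(l, u]`. For `t ∈ (l, u]` the
integrands are `ν (-∞, t]` and `ν (-∞, t)`, so by Tonelli the two integrals are the
`ν ⊗ ν`-measures of `{s ≤ t}` and `{s < t}`. After swapping the coordinates in the second
one these two sets are complementary, hence the sum is `ν(ℝ)² = (F u - F l)²`. -/

open MeasureTheory Set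

section Order

variable {α : Type*} [MeasurableSpace α] [LinearOrder α] [TopologicalSpace α]
  [OrderClosedTopology α] [SecondCountableTopology α] [OpensMeasurableSpace α]

theorem lintegral_measure_Iic_add_lintegral_measure_Iio (ν : Measure α) [SFinite ν] :
    ∫⁻ t, ν (Iic t) ∂ν + ∫⁻ t, ν (Iio t) ∂ν = ν univ * ν univ := by
  have hle : MeasurableSet {p : α × α | p.2 ≤ p.1} :=
    measurableSet_le measurable_snd measurable_fst
  have hlt : MeasurableSet {p : α × α | p.2 < p.1} :=
    measurableSet_lt measurable_snd measurable_fst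
  have hIic : ∫⁻ t, ν (Iic t) ∂ν = ν.prod ν {p | p.2 ≤ p.1} :=
    (Measure.prod_apply hle).symm
  have hIio : ∫⁻ t, ν (Iio t) ∂ν = ν.prod ν {p | p.1 < p.2} := by
    rw [← Measure.prod_swap, Measure.map_apply measurable_swap
      (measurableSet_lt measurable_fst measurable_snd)]
    exact (Measure.prod_apply hlt).symm
  have hcompl : {p : α × α | p.1 < p.2} = {p | p.2 ≤ p.1}ᶜ := by
    ext p
    simp [not_le]
  rw [hIic, hIio, hcompl, measure_add_measure_compl hle, ← univ_prod_univ, Measure.prod_prod]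

theorem integral_measureReal_Iic_add_integral_measureReal_Iio (ν : Measure α)
    [IsFiniteMeasure ν] :
    ∫ t, ν.real (Iic t) ∂ν + ∫ t, ν.real (Iio t) ∂ν = ν.real univ ^ 2 := by
  have hIic : ∫ t, ν.real (Iic t) ∂ν = (∫⁻ t, ν (Iic t) ∂ν).toReal :=
    integral_toReal (measurable_measure_prodMk_left
      (measurableSet_le measurable_snd measurable_fst)).aemeasurable
      (.of_forall fun _ => measure_lt_top ν _)
  have hIio : ∫ t, ν.real (Iio t) ∂ν = (∫⁻ t, ν (Iio t) ∂ν).toReal :=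
    integral_toReal (measurable_measure_prodMk_left
      (measurableSet_lt measurable_snd measurable_fst)).aemeasurable
      (.of_forall fun _ => measure_lt_top ν _)
  have hsum := lintegral_measure_Iic_add_lintegral_measure_Iio ν
  have hfin : ∫⁻ t, ν (Iic t) ∂ν + ∫⁻ t, ν (Iio t) ∂ν ≠ ⊤ :=
    hsum ▸ ENNReal.mul_ne_top (measure_ne_top ν _) (measure_ne_top ν _)
  rw [hIic, hIio,
    ← ENNReal.toReal_add (ENNReal.add_ne_top.1 hfin).1 (ENNReal.add_ne_top.1 hfin).2, hsum,
    ENNReal.toReal_mul, sq, measureReal_def]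

end Order

namespace StieltjesFunction

theorem measureReal_restrict_Ioc_Iic (F : StieltjesFunction ℝ) {l u t : ℝ} (hle : l ≤ t)
    (htu : t ≤ u) : (F.measure.restrict (Ioc l u)).real (Iic t) = F t - F l := by
  rw [measureReal_restrict_apply measurableSet_Iic, inter_comm, Ioc_inter_Iic, inf_eq_right.2 htu,
    measureReal_def, F.measure_Ioc, ENNReal.toReal_ofReal (sub_nonneg.2 (F.mono hle))]

theorem measureReal_restrict_Ioc_Iio (F : StieltjesFunction ℝ) {l u t : ℝ} (hlt : l < t)
    (htu : t ≤ u) :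
    (F.measure.restrict (Ioc l u)).real (Iio t) = Function.leftLim F t - F l := by
  have hset : Ioc l u ∩ Iio t = Ioo l t := by
    ext x
    simp only [mem_inter_iff, mem_Ioc, mem_Iio, mem_Ioo]
    exact ⟨fun h => ⟨h.1.1, h.2⟩, fun h => ⟨⟨h.1, h.2.le.trans htu⟩, h.2⟩⟩
  rw [measureReal_restrict_apply measurableSet_Iio, inter_comm, hset, measureReal_def,
    F.measure_Ioo, ENNReal.toReal_ofReal (sub_nonneg.2 (F.mono.le_leftLim hlt))]

end StieltjesFunction

theorem stieltjes_sum_of_integrals_eq_sq_general (F : StieltjesFunction ℝ)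
    (l u : ℝ) (hlu : l < u) :
    (∫ t in Set.Ioc l u, (F t - F l) ∂F.measure) +
      (∫ t in Set.Ioc l u, (Function.leftLim F t - F l) ∂F.measure)
      = (F u - F l) ^ 2 := by
  set ν := F.measure.restrict (Ioc l u)
  have : IsFiniteMeasure ν := isFiniteMeasure_restrict.2 measure_Ioc_lt_top.ne
  calc (∫ t in Ioc l u, (F t - F l) ∂F.measure) +
        (∫ t in Ioc l u, (Function.leftLim F t - F l) ∂F.measure)
      = ∫ t, ν.real (Iic t) ∂ν + ∫ t, ν.real (Iio t) ∂ν := by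
        congr 1 <;> refine setIntegral_congr_fun measurableSet_Ioc fun t ht => ?_
        · exact (F.measureReal_restrict_Ioc_Iic ht.1.le ht.2).symm
        · exact (F.measureReal_restrict_Ioc_Iio ht.1 ht.2).symm
    _ = (F u - F l) ^ 2 := by
        rw [integral_measureReal_Iic_add_integral_measureReal_Iio, measureReal_restrict_apply_univ,
          measureReal_def, F.measure_Ioc, ENNReal.toReal_ofReal (sub_nonneg.2 (F.mono hlu.le))]

/-- For any CDF `F` and `0 ≤ l < u`,
`∫_{(l,u]}(F(t) − F(l)) dF(t) + ∫_{(l,u]}(F(t−) − F(l)) dF(t) = (F(u) − F(l))²`. -/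
theorem stieltjes_sum_of_integrals_eq_sq (F : StieltjesFunction ℝ)
    (l u : ℝ) (hl : 0 ≤ l) (hlu : l < u) :
    (∫ t in Set.Ioc l u, (F t - F l) ∂F.measure) +
      (∫ t in Set.Ioc l u, (Function.leftLim F t - F l) ∂F.measure)
      = (F u - F l) ^ 2 :=
  stieltjes_sum_of_integrals_eq_sq_general F l u hlu
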